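/- The number of parking functions of size n whose parking permutation avoids both 213 and 312 equals ∑_{k=0}^{n−1} binom(n−1, k)·(k+1)!. -/

import Mathlib

open Finset

noncomputable section

/-- The parking process over the first `k` cars (cars are `0,...,k-1`, i.e. cars `1,...,k`
in 1-indexed terms): returns `some occ` where `occ` maps each spot to the car parked there
(`none` meaning empty), or `none` if some car failed to park.  Car `c` drives to its
preferred spot `f c` and parks at the first free spot with index `≥ f c`, failing if
no such spot exists. -/
def parkAux {n : ℕ} (f : Fin n → Fin n) : ℕ → Option (Fin n → Option (Fin n))
  | 0 => some fun _ => none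
  | k + 1 =>
    (parkAux f k).bind fun occ =>
      if h : k < n then
        if hS : (Finset.univ.filter fun s => f ⟨k, h⟩ ≤ s ∧ occ s = none).Nonempty then
          some (Function.update occ
            ((Finset.univ.filter fun s => f ⟨k, h⟩ ≤ s ∧ occ s = none).min' hS)
            (some ⟨k, h⟩))
        else none
      else some occ

/-- All `n` cars park successfully. -/
def AllPark {n : ℕ} (f : Fin n → Fin n) : Prop := (parkAux f n).isSome

/-- `f` is a parking function: for every `i ∈ [n]`, at least `i` cars prefer
the first `i` spots.  (Here `i : Fin n` denotes the `(i+1)`-st spot, 0-indexed.) -/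
def IsParkingFunction {n : ℕ} (f : Fin n → Fin n) : Prop :=
  ∀ i : Fin n, i.val + 1 ≤ (Finset.univ.filter fun j => f j ≤ i).card

/-- `ρ` is the parking permutation of `f`: after all cars have parked,
spot `i` is occupied by car `ρ i`. -/
def IsParkingPerm {n : ℕ} (f : Fin n → Fin n) (ρ : Equiv.Perm (Fin n)) : Prop :=
  parkAux f n = some fun i => some (ρ i)

/-- `π` contains `σ` as a pattern. -/
def ContainsPattern {n m : ℕ} (π : Equiv.Perm (Fin n)) (σ : Equiv.Perm (Fin m)) : Prop :=
  ∃ g : Fin m → Fin n, StrictMono g ∧ ∀ a b : Fin m, σ a < σ b ↔ π (g a) < π (g b)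

/-- `ρ` avoids every pattern in the list `pats`. -/
def AvoidsAll {n : ℕ} (ρ : Equiv.Perm (Fin n)) (pats : List (Equiv.Perm (Fin 3))) : Prop :=
  ∀ σ ∈ pats, ¬ ContainsPattern ρ σ

/-- The number of parking functions of size `n` whose parking permutation avoids
all patterns in `pats`. -/
def pk (n : ℕ) (pats : List (Equiv.Perm (Fin 3))) : ℕ :=
  Nat.card {f : Fin n → Fin n // IsParkingFunction f ∧
    ∃ ρ : Equiv.Perm (Fin n), IsParkingPerm f ρ ∧ AvoidsAll ρ pats}

def p123 : Equiv.Perm (Fin 3) := Equiv.ofBijective ![0, 1, 2] (by decide)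
def p132 : Equiv.Perm (Fin 3) := Equiv.ofBijective ![0, 2, 1] (by decide)
def p213 : Equiv.Perm (Fin 3) := Equiv.ofBijective ![1, 0, 2] (by decide)
def p231 : Equiv.Perm (Fin 3) := Equiv.ofBijective ![1, 2, 0] (by decide)
def p312 : Equiv.Perm (Fin 3) := Equiv.ofBijective ![2, 0, 1] (by decide)
def p321 : Equiv.Perm (Fin 3) := Equiv.ofBijective ![2, 1, 0] (by decide)
/-!
Car `c` ends in spot `ρ⁻¹ c` exactly when that spot is the first one at or after its preference
`f c` not taken by an earlier car. So the parking functions with parking permutation `ρ` are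
obtained by choosing each car's preference independently from an admissible set, and their number
is a product. Avoiding `213` and `312` means having no valley, i.e. `ρ` increases up to its peak
`p = ρ⁻¹ (n - 1)` and decreases after it. The car in a spot `s ≤ p` may then prefer any spot
`≤ s`, while the car in a spot `s > p` must prefer `s`, so `ρ` carries `(p + 1)!` parking
functions. Finally a unimodal permutation is determined by the set of its values left of the peak,
which is an arbitrary `p`-subset of the `n - 1` non-maximal values.
-/

open Equiv Function Nat

lemma Nat.card_subtype_exists_and_eq_sum {α β : Type*} [Finite α] [Fintype β] {P : α → β → Prop}
    {Q : β → Prop} [DecidablePred Q] (huniq : ∀ a b b', P a b → P a b' → b = b') :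
    Nat.card {a // ∃ b, P a b ∧ Q b} = ∑ b : {b // Q b}, Nat.card {a // P a b} := by
  rw [← Nat.card_sigma]
  refine Nat.card_congr (Equiv.ofBijective (fun x => ⟨x.2.1, x.1.1, x.2.2, x.1.2⟩) ⟨?_, ?_⟩).symm
  · rintro ⟨⟨b, hb⟩, ⟨a, ha⟩⟩ ⟨⟨b', hb'⟩, ⟨a', ha'⟩⟩ h
    obtain rfl : a = a' := congrArg Subtype.val h
    obtain rfl := huniq a b b' ha ha'
    rfl
  · rintro ⟨a, b, ha, hb⟩
    exact ⟨⟨⟨b, hb⟩, ⟨a, ha⟩⟩, rfl⟩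

lemma Tuple.eq_sort_iff_strictMono {n : ℕ} {α : Type*} [LinearOrder α] {f : Fin n → α}
    (hf : Injective f) {σ : Perm (Fin n)} : σ = Tuple.sort f ↔ StrictMono (f ∘ σ) :=
  ⟨fun h => h ▸ (Tuple.monotone_sort f).strictMono_of_injective (hf.comp (Equiv.injective _)),
    fun h => Tuple.eq_sort_iff.2 ⟨h.monotone, fun _ _ hij heq => absurd heq (h hij).ne⟩⟩

lemma strictMono_vecCons_three {α : Type*} [Preorder α] {a b c : α} (hab : a < b) (hbc : b < c) :
    StrictMono ![a, b, c] := by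
  simp [Fin.strictMono_iff_lt_succ, Fin.forall_fin_succ, hab, hbc]

lemma Fin.prod_ite_le_eq_factorial {n : ℕ} (p : Fin n) :
    ∏ s : Fin n, (if s ≤ p then (s : ℕ) + 1 else 1) = ((p : ℕ) + 1)! := by
  have hfilter : (range n).filter (· ≤ (p : ℕ)) = range ((p : ℕ) + 1) := by
    ext i
    simp only [mem_filter, mem_range]
    have := p.isLt
    omega
  simp_rw [Fin.le_iff_val_le_val]
  rw [Fin.prod_univ_eq_prod_range (fun i => if i ≤ (p : ℕ) then i + 1 else 1), ← prod_filter,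
    hfilter, prod_range_add_one_eq_factorial]

section Parking

variable {n : ℕ}

def parkedBy (ρ : Perm (Fin n)) (k : ℕ) (s : Fin n) : Option (Fin n) :=
  if (ρ s : ℕ) < k then some (ρ s) else none

lemma parkedBy_eq_none_iff {ρ : Perm (Fin n)} {k : ℕ} {s : Fin n} :
    parkedBy ρ k s = none ↔ k ≤ ρ s := by
  simp [parkedBy]

lemma parkedBy_succ (ρ : Perm (Fin n)) (c : Fin n) :
    parkedBy ρ (c + 1) = update (parkedBy ρ c) (ρ.symm c) (some c) := by
  funext s
  rcases eq_or_ne s (ρ.symm c) with rfl | hs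
  · simp [parkedBy]
  · have hc : (ρ s : ℕ) ≠ c := Fin.val_ne_of_ne fun h => hs (by simp [← h])
    simp only [parkedBy, update_of_ne hs]
    congr 1
    exact propext (by omega)

lemma parkAux_succ_of_eq_some {f : Fin n → Fin n} {c : Fin n} {occ : Fin n → Option (Fin n)}
    (h : parkAux f c = some occ) :
    parkAux f (c + 1) =
      if hS : (univ.filter fun s => f c ≤ s ∧ occ s = none).Nonempty then
        some (update occ ((univ.filter fun s => f c ≤ s ∧ occ s = none).min' hS) (some c))
      else none := by
  simp [parkAux, h]

lemma coe_filter_parkedBy (f : Fin n → Fin n) (ρ : Perm (Fin n)) (c : Fin n) :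
    (↑(univ.filter fun s => f c ≤ s ∧ parkedBy ρ c s = none) : Set (Fin n)) =
      {t | f c ≤ t ∧ c ≤ ρ t} := by
  ext t
  simp only [coe_filter, mem_univ, true_and, parkedBy_eq_none_iff, Set.mem_ofPred_eq,
    Fin.val_fin_le]

lemma parkAux_succ_eq_parkedBy_iff {f : Fin n → Fin n} {ρ : Perm (Fin n)} (c : Fin n) :
    parkAux f (c + 1) = some (parkedBy ρ (c + 1)) ↔
      parkAux f c = some (parkedBy ρ c) ∧ IsLeast {t | f c ≤ t ∧ c ≤ ρ t} (ρ.symm c) := by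
  constructor
  · intro h
    obtain ⟨occ, hocc⟩ : ∃ occ, parkAux f c = some occ := by
      cases hk : parkAux f c with
      | none => simp [parkAux, hk] at h
      | some occ => exact ⟨occ, rfl⟩
    rw [parkAux_succ_of_eq_some hocc] at h
    split_ifs at h with hS
    set s := (univ.filter fun s => f c ≤ s ∧ occ s = none).min' hS
    have hmin := isLeast_min' _ hS
    have hupd : update occ s (some c) = parkedBy ρ (c + 1) := Option.some_injective _ h
    have hs : s = ρ.symm c := by
      have := congrFun hupd s
      simp only [update_self, parkedBy] at this
      split_ifs at this
      rw [Option.some_injective _ this]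
      simp
    have hocc_eq : occ = parkedBy ρ c := by
      funext t
      rcases eq_or_ne t s with rfl | ht
      · rw [(Finset.mem_filter.1 hmin.1).2.2, eq_comm, parkedBy_eq_none_iff, hs, apply_symm_apply]
      · have := congrFun hupd t
        rwa [update_of_ne ht, parkedBy_succ, update_of_ne (hs ▸ ht)] at this
    subst hocc_eq
    rw [← coe_filter_parkedBy, ← hs]
    exact ⟨hocc, hmin⟩
  · rintro ⟨h, hleast⟩
    rw [← coe_filter_parkedBy] at hleast
    have hS : (univ.filter fun s => f c ≤ s ∧ parkedBy ρ c s = none).Nonempty :=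
      ⟨_, Finset.mem_coe.1 hleast.1⟩
    rw [parkAux_succ_of_eq_some h, dif_pos hS, parkedBy_succ, (isLeast_min' _ hS).unique hleast]

lemma parkAux_eq_parkedBy_iff {f : Fin n → Fin n} {ρ : Perm (Fin n)} {k : ℕ} (hk : k ≤ n) :
    parkAux f k = some (parkedBy ρ k) ↔
      ∀ c : Fin n, (c : ℕ) < k → IsLeast {t | f c ≤ t ∧ c ≤ ρ t} (ρ.symm c) := by
  induction k with
  | zero => simp [parkAux, parkedBy, funext_iff]
  | succ k ih =>
    rw [parkAux_succ_eq_parkedBy_iff ⟨k, hk⟩, ih (by omega)]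
    constructor
    · rintro ⟨hlt, hk⟩ c hc
      rcases Nat.lt_succ_iff_lt_or_eq.1 hc with hc | hc
      · exact hlt c hc
      · exact (Fin.ext hc : c = ⟨k, _⟩) ▸ hk
    · exact fun h => ⟨fun c hc => h c (by omega), h _ (by simp)⟩

theorem isParkingPerm_iff {f : Fin n → Fin n} {ρ : Perm (Fin n)} :
    IsParkingPerm f ρ ↔ ∀ c : Fin n, IsLeast {t | f c ≤ t ∧ c ≤ ρ t} (ρ.symm c) := by
  have hfull : parkedBy ρ n = fun s => some (ρ s) := funext fun s => if_pos (ρ s).isLt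
  rw [IsParkingPerm, ← hfull, parkAux_eq_parkedBy_iff le_rfl]
  simp

lemma isParkingFunction_of_le_perm {f : Fin n → Fin n} (σ : Perm (Fin n)) (h : ∀ c, f c ≤ σ c) :
    IsParkingFunction f := by
  intro i
  calc i.val + 1 = #((Iic i).map σ.symm.toEmbedding) := by simp
    _ ≤ #(univ.filter fun j => f j ≤ i) := card_le_card fun c hc => by
      obtain ⟨t, ht, rfl⟩ := Finset.mem_map.1 hc
      simpa using (h _).trans (by simpa using ht)

lemma IsParkingPerm.isParkingFunction {f : Fin n → Fin n} {ρ : Perm (Fin n)}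
    (h : IsParkingPerm f ρ) : IsParkingFunction f :=
  isParkingFunction_of_le_perm ρ.symm fun c => (isParkingPerm_iff.1 h c).1.1

lemma IsParkingPerm.unique {f : Fin n → Fin n} {ρ ρ' : Perm (Fin n)}
    (h : IsParkingPerm f ρ) (h' : IsParkingPerm f ρ') : ρ = ρ' := by
  ext s : 1
  simpa using congrFun (Option.some_injective _ (h.symm.trans h')) s

lemma card_isParkingPerm_eq_prod (ρ : Perm (Fin n)) :
    Nat.card {f : Fin n → Fin n // IsParkingPerm f ρ} =
      ∏ s, Nat.card {a : Fin n // IsLeast {t | a ≤ t ∧ ρ s ≤ ρ t} s} := by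
  simp_rw [isParkingPerm_iff]
  rw [Nat.card_congr
      (Equiv.subtypePiEquivPi (p := fun c a => IsLeast {t | a ≤ t ∧ c ≤ ρ t} (ρ.symm c))),
    Nat.card_pi]
  exact (Equiv.prod_comp ρ _).symm.trans (by simp)

end Parking

section Patterns

variable {n : ℕ}

lemma containsPattern_p213_iff {ρ : Perm (Fin n)} :
    ContainsPattern ρ p213 ↔ ∃ i j k, i < j ∧ j < k ∧ ρ j < ρ i ∧ ρ i < ρ k := by
  constructor
  · rintro ⟨g, hg, hpat⟩
    exact ⟨g 0, g 1, g 2, hg (by decide), hg (by decide), (hpat 1 0).1 (by decide),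
      (hpat 0 2).1 (by decide)⟩
  · rintro ⟨i, j, k, hij, hjk, hji, hik⟩
    refine ⟨![i, j, k], strictMono_vecCons_three hij hjk, fun a b => ?_⟩
    fin_cases a <;> fin_cases b <;>
      simp [p213, hji, hik, hji.trans hik, hji.le, hik.le, (hji.trans hik).le]

lemma containsPattern_p312_iff {ρ : Perm (Fin n)} :
    ContainsPattern ρ p312 ↔ ∃ i j k, i < j ∧ j < k ∧ ρ j < ρ k ∧ ρ k < ρ i := by
  constructor
  · rintro ⟨g, hg, hpat⟩
    exact ⟨g 0, g 1, g 2, hg (by decide), hg (by decide), (hpat 1 2).1 (by decide),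
      (hpat 2 0).1 (by decide)⟩
  · rintro ⟨i, j, k, hij, hjk, hjk', hki⟩
    refine ⟨![i, j, k], strictMono_vecCons_three hij hjk, fun a b => ?_⟩
    fin_cases a <;> fin_cases b <;>
      simp [p312, hjk', hki, hjk'.trans hki, hjk'.le, hki.le, (hjk'.trans hki).le]

lemma avoidsAll_p213_p312_iff {ρ : Perm (Fin n)} :
    AvoidsAll ρ [p213, p312] ↔ ∀ i j k, i < j → j < k → ρ i < ρ j ∨ ρ k < ρ j := by
  simp only [AvoidsAll, List.mem_cons, List.not_mem_nil, or_false, forall_eq_or_imp, forall_eq,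
    containsPattern_p213_iff, containsPattern_p312_iff, not_exists, not_and, not_lt]
  constructor
  · rintro ⟨h213, h312⟩ i j k hij hjk
    by_contra! hvalley
    rcases lt_trichotomy (ρ i) (ρ k) with hik | hik | hik
    · exact (h213 i j k hij hjk (hvalley.1.lt_of_ne (ρ.injective.ne hij.ne'))).not_gt hik
    · exact (hij.trans hjk).ne (ρ.injective hik)
    · exact (h312 i j k hij hjk (hvalley.2.lt_of_ne (ρ.injective.ne hjk.ne))).not_gt hik
  · intro h
    refine ⟨fun i j k hij hjk hji => ?_, fun i j k hij hjk hjk' => ?_⟩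
    · exact ((h i j k hij hjk).resolve_left hji.not_gt).le.trans hji.le
    · exact ((h i j k hij hjk).resolve_right hjk'.not_gt).le.trans hjk'.le

end Patterns

section Unimodal

variable {m : ℕ}

def peak (ρ : Perm (Fin (m + 1))) : Fin (m + 1) := ρ.symm (Fin.last m)

def IsUnimodal (ρ : Perm (Fin (m + 1))) : Prop :=
  StrictMonoOn ρ (Set.Iic (peak ρ)) ∧ StrictAntiOn ρ (Set.Ici (peak ρ))

lemma apply_peak (ρ : Perm (Fin (m + 1))) : ρ (peak ρ) = Fin.last m :=
  ρ.apply_symm_apply _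

lemma apply_lt_last_of_ne_peak {ρ : Perm (Fin (m + 1))} {s : Fin (m + 1)} (hs : s ≠ peak ρ) :
    ρ s < Fin.last m :=
  (Fin.le_last _).lt_of_ne fun h => hs (by rw [peak, ← h, symm_apply_apply])

lemma isUnimodal_iff {ρ : Perm (Fin (m + 1))} :
    IsUnimodal ρ ↔ ∀ i j k, i < j → j < k → ρ i < ρ j ∨ ρ k < ρ j := by
  constructor
  · rintro ⟨hinc, hdec⟩ i j k hij hjk
    rcases le_or_gt j (peak ρ) with hj | hj
    · exact Or.inl (hinc (hij.le.trans hj) hj hij)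
    · exact Or.inr (hdec hj.le (hj.trans hjk).le hjk)
  · intro h
    refine ⟨fun t ht s hs hts => ?_, fun s hs t ht hst => ?_⟩
    · rcases (Set.mem_Iic.1 hs).lt_or_eq with hs | rfl
      · exact (h t s _ hts hs).resolve_right (apply_peak ρ ▸ not_lt.2 (Fin.le_last _))
      · exact apply_peak ρ ▸ apply_lt_last_of_ne_peak hts.ne
    · rcases (Set.mem_Ici.1 hs).lt_or_eq with hs | rfl
      · exact (h _ s t hs hst).resolve_left (apply_peak ρ ▸ not_lt.2 (Fin.le_last _))
      · exact apply_peak ρ ▸ apply_lt_last_of_ne_peak hst.ne'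

lemma IsUnimodal.setOf_isLeast_of_le {ρ : Perm (Fin (m + 1))} (hρ : IsUnimodal ρ)
    {s : Fin (m + 1)} (hs : s ≤ peak ρ) :
    {a | IsLeast {t | a ≤ t ∧ ρ s ≤ ρ t} s} = Set.Iic s := by
  ext a
  refine ⟨fun h => h.1.1, fun has => ⟨⟨has, le_rfl⟩, fun t ⟨_, hst⟩ => not_lt.1 fun hts => ?_⟩⟩
  exact (hρ.1 (hts.le.trans hs) hs hts).not_ge hst

lemma IsUnimodal.setOf_isLeast_of_lt {ρ : Perm (Fin (m + 1))} (hρ : IsUnimodal ρ)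
    {s : Fin (m + 1)} (hs : peak ρ < s) :
    {a | IsLeast {t | a ≤ t ∧ ρ s ≤ ρ t} s} = {s} := by
  ext a
  refine ⟨fun h => ?_, fun has => ?_⟩
  · have hρt : ρ s ≤ ρ (max a (peak ρ)) := by
      rcases le_total a (peak ρ) with ha | ha
      · rw [max_eq_right ha, apply_peak]
        exact Fin.le_last _
      · rw [max_eq_left ha]
        exact hρ.2.antitoneOn ha hs.le h.1.1
    have hsa := h.2 ⟨le_max_left _ _, hρt⟩
    exact le_antisymm h.1.1 ((le_max_iff.1 hsa).resolve_right hs.not_ge)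
  · rw [Set.mem_singleton_iff.1 has]
    exact ⟨⟨le_rfl, le_rfl⟩, fun t ht => ht.1⟩

lemma IsUnimodal.card_isParkingPerm {ρ : Perm (Fin (m + 1))} (hρ : IsUnimodal ρ) :
    Nat.card {f : Fin (m + 1) → Fin (m + 1) // IsParkingPerm f ρ} = ((peak ρ : ℕ) + 1)! := by
  rw [card_isParkingPerm_eq_prod, ← Fin.prod_ite_le_eq_factorial]
  refine prod_congr rfl fun s _ => ?_
  rw [← Set.coe_ofPred]
  split_ifs with hs
  · rw [hρ.setOf_isLeast_of_le hs]
    simp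
  · rw [hρ.setOf_isLeast_of_lt (not_le.1 hs)]
    simp

def leftValues (ρ : Perm (Fin (m + 1))) : Finset (Fin (m + 1)) :=
  (Iio (peak ρ)).map ρ.toEmbedding

lemma mem_leftValues {ρ : Perm (Fin (m + 1))} {v : Fin (m + 1)} :
    v ∈ leftValues ρ ↔ ρ.symm v < peak ρ := by
  simp [leftValues]

lemma card_leftValues (ρ : Perm (Fin (m + 1))) : #(leftValues ρ) = peak ρ := by
  simp [leftValues]

lemma last_notMem_leftValues (ρ : Perm (Fin (m + 1))) : Fin.last m ∉ leftValues ρ := by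
  simp [mem_leftValues, peak]

-- Sorting by this key lists `S` increasingly, then its complement decreasingly: when
-- `Fin.last m ∉ S` this is the unimodal permutation with left values `S`.
def unimodalKey (S : Finset (Fin (m + 1))) (v : Fin (m + 1)) : ℕ :=
  if v ∈ S then v else 2 * m + 2 - v

lemma unimodalKey_injective (S : Finset (Fin (m + 1))) : Injective (unimodalKey S) := by
  intro v w h
  have := v.isLt
  have := w.isLt
  simp only [unimodalKey] at h
  split_ifs at h <;> omega

lemma strictMono_unimodalKey_comp_iff {S : Finset (Fin (m + 1))} (hS : Fin.last m ∉ S)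
    {ρ : Perm (Fin (m + 1))} :
    StrictMono (unimodalKey S ∘ ρ) ↔ IsUnimodal ρ ∧ leftValues ρ = S := by
  constructor
  · intro h
    refine ⟨isUnimodal_iff.2 fun i j k hij hjk => ?_, ?_⟩
    · have hij := h hij
      have hjk := h hjk
      have := (ρ j).isLt
      have := (ρ k).isLt
      simp only [comp_apply, unimodalKey] at hij hjk
      simp only [Fin.lt_def]
      split_ifs at hij hjk <;> omega
    · ext v
      have hv := v.isLt
      rw [mem_leftValues, ← h.lt_iff_lt]
      simp only [comp_apply, apply_symm_apply, apply_peak, unimodalKey, if_neg hS, Fin.val_last]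
      split_ifs with hvS <;> simp only [hvS, iff_true, iff_false] <;> omega
  · rintro ⟨hρ, rfl⟩ s t hst
    have := (ρ s).isLt
    have := (ρ t).isLt
    simp only [comp_apply, unimodalKey, mem_leftValues, symm_apply_apply]
    rcases lt_or_ge t (peak ρ) with ht | ht
    · rw [if_pos (hst.trans ht), if_pos ht]
      exact hρ.1 (hst.trans ht).le ht.le hst
    rcases lt_or_ge s (peak ρ) with hs | hs
    · rw [if_pos hs, if_neg ht.not_gt]
      omega
    · rw [if_neg hs.not_gt, if_neg ht.not_gt]
      have : ρ t < ρ s := hρ.2 hs (hs.trans hst.le) hst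
      omega

lemma strictMono_unimodalKey_comp_sort (S : Finset (Fin (m + 1))) :
    StrictMono (unimodalKey S ∘ Tuple.sort (unimodalKey S)) :=
  (Tuple.eq_sort_iff_strictMono (unimodalKey_injective S)).1 rfl

def unimodalEquivLeftValues :
    {ρ : Perm (Fin (m + 1)) // IsUnimodal ρ} ≃ {S : Finset (Fin (m + 1)) // Fin.last m ∉ S} where
  toFun ρ := ⟨leftValues ρ.1, last_notMem_leftValues ρ.1⟩
  invFun S := ⟨Tuple.sort (unimodalKey S.1),
    ((strictMono_unimodalKey_comp_iff S.2).1 (strictMono_unimodalKey_comp_sort S.1)).1⟩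
  left_inv ρ := Subtype.ext <| Eq.symm <|
    (Tuple.eq_sort_iff_strictMono (unimodalKey_injective _)).2 <|
      (strictMono_unimodalKey_comp_iff (last_notMem_leftValues ρ.1)).2 ⟨ρ.2, rfl⟩
  right_inv S := Subtype.ext
    ((strictMono_unimodalKey_comp_iff S.2).1 (strictMono_unimodalKey_comp_sort S.1)).2

open scoped Classical in
lemma sum_isUnimodal_factorial_peak :
    ∑ ρ : {ρ : Perm (Fin (m + 1)) // IsUnimodal ρ}, ((peak ρ.1 : ℕ) + 1)! =
      ∑ k ∈ range (m + 1), m.choose k * (k + 1)! := by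
  calc ∑ ρ : {ρ : Perm (Fin (m + 1)) // IsUnimodal ρ}, ((peak ρ.1 : ℕ) + 1)!
      = ∑ S : {S : Finset (Fin (m + 1)) // Fin.last m ∉ S}, (#S.1 + 1)! :=
        Fintype.sum_equiv unimodalEquivLeftValues _ _ fun ρ => by
          simp [unimodalEquivLeftValues, card_leftValues]
    _ = ∑ S ∈ (univ.erase (Fin.last m)).powerset, (#S + 1)! :=
        (sum_subtype _ (fun S => by simp [subset_erase]) fun S => (#S + 1)!).symm
    _ = ∑ k ∈ range (m + 1), m.choose k * (k + 1)! := by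
        rw [sum_powerset_apply_card fun k => (k + 1)!]
        simp

end Unimodal

theorem stmt18 (n : ℕ) (hn : 1 ≤ n) :
    pk n [p213, p312] =
      ∑ k ∈ Finset.range n, Nat.choose (n - 1) k * (k + 1).factorial := by
  obtain ⟨m, rfl⟩ : ∃ m, n = m + 1 := ⟨n - 1, by omega⟩
  have hcond (f : Fin (m + 1) → Fin (m + 1)) :
      (IsParkingFunction f ∧ ∃ ρ, IsParkingPerm f ρ ∧ AvoidsAll ρ [p213, p312]) ↔
        ∃ ρ, IsParkingPerm f ρ ∧ IsUnimodal ρ := by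
    simp only [avoidsAll_p213_p312_iff, ← isUnimodal_iff]
    exact ⟨And.right, fun h => ⟨h.elim fun _ hρ => hρ.1.isParkingFunction, h⟩⟩
  classical
  rw [pk, Nat.card_congr (Equiv.subtypeEquivRight hcond),
    Nat.card_subtype_exists_and_eq_sum (P := IsParkingPerm) fun _ _ _ => IsParkingPerm.unique,
    Nat.add_sub_cancel, ← sum_isUnimodal_factorial_peak]
  exact sum_congr rfl fun ρ _ => ρ.2.card_isParkingPerm
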